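/- arXiv:2408.12001 — 4 statements merged into one kernel-verified Lean document; each statement's English description precedes it below -/
import Mathlib

section
/- For any valuation profile v, any bidder n ∈ {1,…,N}, any menu 𝓜 and any 1 ≤ k ≤ N, the k-th rank guarantee satisfies Rᵏ_𝓜(v) ≥ max_{X ∈ 𝓑(𝓜)} Σ_{b∈X} vⁿ_b − Σ_{b∈𝓜} max{vⁿ_b − v⁽ᵏ⁾_b, 0}. -/
open MeasureTheory
open scoped ENNReal BigOperators

namespace RankGuaranteedAuctions

/-- A bundle of items, where the set of items is `Fin M`. -/
abbrev Bundle (M : ℕ) := Finset (Fin M)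

/-- A valuation assigns a real value to every bundle. -/
abbrev Valuation (M : ℕ) := Bundle M → ℝ

/-- A valuation is normalized: value `0` for the empty bundle and values in `[0, vbar]`. -/
def IsValuation (M : ℕ) (vbar : ℝ) (v : Valuation M) : Prop :=
  v ∅ = 0 ∧ ∀ b : Bundle M, 0 ≤ v b ∧ v b ≤ vbar

/-- A menu is a nonempty collection of nonempty bundles. -/
def IsMenu (M : ℕ) (Menu : Finset (Bundle M)) : Prop :=
  Menu.Nonempty ∧ ∅ ∉ Menu

/-- The complete menu `2^S` of all nonempty bundles. -/
noncomputable def completeMenu (M : ℕ) : Finset (Bundle M) :=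
  Finset.univ.erase ∅

/-- A feasible allocation: a set of pairwise disjoint bundles from the menu. -/
def Feasible (M : ℕ) (Menu X : Finset (Bundle M)) : Prop :=
  X ⊆ Menu ∧ ∀ b ∈ X, ∀ b' ∈ X, b ≠ b' → Disjoint b b'

/-- The maximum of `∑ b ∈ X, f b` over feasible allocations `X` from the menu. -/
noncomputable def maxAlloc (M : ℕ) (Menu : Finset (Bundle M)) (f : Bundle M → ℝ) : ℝ :=
  sSup {y : ℝ | ∃ X : Finset (Bundle M), Feasible M Menu X ∧ y = ∑ b ∈ X, f b}

/-- The `k`-th highest value among `w 0, …, w (N-1)` (for `1 ≤ k ≤ N`):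
the maximum over sets `T` of `k` bidders of the minimum of `w` on `T`. -/
noncomputable def kthHighest (N : ℕ) (w : Fin N → ℝ) (k : ℕ) : ℝ :=
  sSup {x : ℝ | ∃ T : Finset (Fin N), T.card = k ∧ x = sInf (w '' (T : Set (Fin N)))}

/-- The `k`-th rank guarantee `R^k_𝓜(v)`. -/
noncomputable def rankGuarantee (M N : ℕ) (Menu : Finset (Bundle M))
    (v : Fin N → Valuation M) (k : ℕ) : ℝ :=
  maxAlloc M Menu fun b => kthHighest N (fun n => v n b) k

/-- The ex-post efficient surplus: the maximum over feasible allocations `X` with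
`|X| ≤ N` and injective assignments `ι` of bundles in `X` to bidders of the total value. -/
noncomputable def surplusEx (M N : ℕ) (Menu : Finset (Bundle M))
    (v : Fin N → Valuation M) : ℝ :=
  sSup {y : ℝ | ∃ X : Finset (Bundle M), Feasible M Menu X ∧ X.card ≤ N ∧
    ∃ ι : Bundle M → Fin N, Set.InjOn ι ↑X ∧ y = ∑ b ∈ X, v (ι b) b}

/-- The average `F̄ = (1/N) ∑ₙ Fₙ` of the bidder-marginals of `F`. -/
noncomputable def avgMarginal (M N : ℕ) (F : Measure (Fin N → Valuation M)) :
    Measure (Valuation M) :=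
  (N : ℝ≥0∞)⁻¹ • ∑ n : Fin N, F.map (fun v => v n)

/-- The ex-ante efficient surplus `V_𝓜(F)`. -/
noncomputable def Vsurplus (M N : ℕ) (Menu : Finset (Bundle M))
    (F : Measure (Fin N → Valuation M)) : ℝ :=
  ∫ v, surplusEx M N Menu v ∂F

/-- A Borel probability measure on valuation profiles (supported on profiles of
valuations bounded by `vbar`). -/
def ProfileOK (M N : ℕ) (vbar : ℝ) (F : Measure (Fin N → Valuation M)) : Prop :=
  IsProbabilityMeasure F ∧ F {v | ∀ n, IsValuation M vbar (v n)} = 1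

/-- A Borel probability measure on valuations (supported on valuations bounded by `vbar`). -/
def ValOK (M : ℕ) (vbar : ℝ) (G : Measure (Valuation M)) : Prop :=
  IsProbabilityMeasure G ∧ G {w | IsValuation M vbar w} = 1

/-- `κ` is a partition of the bundle `b` into nonempty, pairwise disjoint parts. -/
def IsPartitionOf (M : ℕ) (κ : Finset (Bundle M)) (b : Bundle M) : Prop :=
  (∀ c ∈ κ, c ≠ ∅) ∧ (∀ c ∈ κ, ∀ c' ∈ κ, c ≠ c' → Disjoint c c') ∧ κ.sup id = b

/-- Feasibility for homogeneous goods: total number of allocated items is at most `M`. -/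
def FeasibleQ (M : ℕ) (Menu X : Finset (Bundle M)) : Prop :=
  X ⊆ Menu ∧ ∑ b ∈ X, b.card ≤ M

/-- The maximum of `∑ b ∈ X, f b` over homogeneous-goods-feasible allocations `X`. -/
noncomputable def maxAllocQ (M : ℕ) (Menu : Finset (Bundle M)) (f : Bundle M → ℝ) : ℝ :=
  sSup {y : ℝ | ∃ X : Finset (Bundle M), FeasibleQ M Menu X ∧ y = ∑ b ∈ X, f b}

/-- An assignment of pairwise disjoint bundles to the `N` bidders. -/
def IsAssignment (M N : ℕ) (a : Fin N → Bundle M) : Prop :=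
  ∀ n n' : Fin N, n ≠ n' → Disjoint (a n) (a n')

/-- An assignment is efficient if it maximizes total value over all assignments. -/
def IsEfficient (M N : ℕ) (v : Fin N → Valuation M) (a : Fin N → Bundle M) : Prop :=
  IsAssignment M N a ∧
    ∀ a' : Fin N → Bundle M, IsAssignment M N a' → ∑ n, v n (a' n) ≤ ∑ n, v n (a n)

/-- The VCG revenue at the efficient assignment `a`: the sum over bidders `n` of
`max_{assignments to bidders other than n} ∑_{n' ≠ n} v^{n'} − ∑_{n' ≠ n} v^{n'}(a n')`. -/
noncomputable def vcgRevenue (M N : ℕ) (v : Fin N → Valuation M)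
    (a : Fin N → Bundle M) : ℝ :=
  ∑ n : Fin N,
    (sSup {y : ℝ | ∃ a' : Fin N → Bundle M, IsAssignment M N a' ∧ a' n = ∅ ∧
        y = ∑ n' ∈ Finset.univ.erase n, v n' (a' n')}
      - ∑ n' ∈ Finset.univ.erase n, v n' (a n'))

/-- An unbounded valuation: value `0` for the empty bundle and nonnegative values. -/
def IsValuationNN (M : ℕ) (v : Valuation M) : Prop :=
  v ∅ = 0 ∧ ∀ b : Bundle M, 0 ≤ v b

/-- The top-`(k-1)/N` quantile of `v b` under `G`. -/
noncomputable def quantileQ (M N k : ℕ) (G : Measure (Valuation M)) (b : Bundle M) : ℝ :=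
  sInf {q : ℝ | 0 ≤ q ∧ G {w | q < w b} ≤ ((k - 1 : ℕ) : ℝ≥0∞) / (N : ℝ≥0∞)}

/-!
Bundle by bundle, `g b ≤ f b + max (g b - f b) 0`. Summed over a feasible allocation `X`, the
`f`-part is at most the best feasible `f`-value, and the correction part is at most its sum over
the whole menu because the corrections are nonnegative and `X ⊆ 𝓜`. Take `f = v⁽ᵏ⁾`, `g = vⁿ`.
-/

section MaxAlloc

variable {M : ℕ} {Menu : Finset (Bundle M)}

theorem feasible_empty : Feasible M Menu ∅ :=
  ⟨Finset.empty_subset _, by simp⟩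

theorem bddAbove_feasible_sums (f : Bundle M → ℝ) :
    BddAbove {y : ℝ | ∃ X : Finset (Bundle M), Feasible M Menu X ∧ y = ∑ b ∈ X, f b} := by
  refine (Set.finite_range fun X : Menu.powerset => ∑ b ∈ (X : Finset (Bundle M)), f b)
    |>.subset ?_ |>.bddAbove
  rintro y ⟨X, hX, rfl⟩
  exact ⟨⟨X, Finset.mem_powerset.mpr hX.1⟩, rfl⟩

theorem sum_le_maxAlloc {f : Bundle M → ℝ} {X : Finset (Bundle M)} (hX : Feasible M Menu X) :
    ∑ b ∈ X, f b ≤ maxAlloc M Menu f :=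
  le_csSup (bddAbove_feasible_sums f) ⟨X, hX, rfl⟩

theorem maxAlloc_le {f : Bundle M → ℝ} {c : ℝ}
    (h : ∀ X, Feasible M Menu X → ∑ b ∈ X, f b ≤ c) : maxAlloc M Menu f ≤ c :=
  csSup_le ⟨0, ∅, feasible_empty, by simp⟩ fun _ ⟨X, hX, hy⟩ => hy ▸ h X hX

theorem maxAlloc_sub_sum_max_sub_le (f g : Bundle M → ℝ) :
    maxAlloc M Menu g - ∑ b ∈ Menu, max (g b - f b) 0 ≤ maxAlloc M Menu f := by
  rw [sub_le_iff_le_add]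
  refine maxAlloc_le fun X hX => ?_
  calc ∑ b ∈ X, g b ≤ ∑ b ∈ X, (f b + max (g b - f b) 0) :=
        Finset.sum_le_sum fun b _ => by linarith [le_max_left (g b - f b) 0]
    _ = ∑ b ∈ X, f b + ∑ b ∈ X, max (g b - f b) 0 := Finset.sum_add_distrib
    _ ≤ maxAlloc M Menu f + ∑ b ∈ Menu, max (g b - f b) 0 :=
        add_le_add (sum_le_maxAlloc hX)
          (Finset.sum_le_sum_of_subset_of_nonneg hX.1 fun _ _ _ => le_max_right _ _)

end MaxAlloc

theorem rank_guarantee_single_bidder_bound_general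
    (M N : ℕ)
    (v : Fin N → Valuation M)
    (Menu : Finset (Bundle M))
    (n : Fin N) (k : ℕ) :
    rankGuarantee M N Menu v k ≥
      maxAlloc M Menu (v n)
        - ∑ b ∈ Menu, max (v n b - kthHighest N (fun m => v m b) k) 0 :=
  maxAlloc_sub_sum_max_sub_le _ _

/-- For any valuation profile `v`, bidder `n`, menu `𝓜` and `1 ≤ k ≤ N`,
`R^k_𝓜(v) ≥ max_{X ∈ 𝓑(𝓜)} ∑_{b∈X} vⁿ_b − ∑_{b∈𝓜} max{vⁿ_b − v^{(k)}_b, 0}`. -/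
theorem rank_guarantee_single_bidder_bound
    (M N : ℕ) (hM : 1 ≤ M) (vbar : ℝ) (hvbar : 0 ≤ vbar)
    (v : Fin N → Valuation M) (hv : ∀ n, IsValuation M vbar (v n))
    (Menu : Finset (Bundle M)) (hMenu : IsMenu M Menu)
    (n : Fin N) (k : ℕ) (hk1 : 1 ≤ k) (hkN : k ≤ N) :
    rankGuarantee M N Menu v k ≥
      maxAlloc M Menu (v n)
        - ∑ b ∈ Menu, max (v n b - kthHighest N (fun m => v m b) k) 0 :=
  rank_guarantee_single_bidder_bound_general M N v Menu n k

end RankGuaranteedAuctions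
end

section
/- (Sufficiency of the itemized menu under weak substitutability.) Let v be a valuation exhibiting weak substitutability, i.e., Σ_{s∈b} v({s}) ≥ v(b) for every bundle b. Then max_{X ∈ 𝓑(2^S)} Σ_{b∈X} v(b) = Σ_{s∈S} v({s}); in particular the maximum over all feasible allocations equals the maximum over feasible allocations consisting only of singleton bundles. -/
open MeasureTheory
open scoped ENNReal BigOperators

namespace RankGuaranteedAuctions

/-! Weak substitutability bounds each bundle of a feasible allocation by the singleton values
of its items; disjointness makes these item sets distinct, so the total is at most the sum of
all singleton values, which is attained by allocating every item as its own bundle. -/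

section SingletonAllocation

open Finset

variable {α : Type*} [Fintype α] [DecidableEq α]

theorem sum_le_sum_singleton_of_pairwiseDisjoint {f : Finset α → ℝ}
    (hf₀ : ∀ s, 0 ≤ f {s}) (hf : ∀ b, f b ≤ ∑ s ∈ b, f {s})
    {X : Finset (Finset α)} (hX : (X : Set (Finset α)).PairwiseDisjoint id) :
    ∑ b ∈ X, f b ≤ ∑ s, f {s} :=
  calc ∑ b ∈ X, f b ≤ ∑ b ∈ X, ∑ s ∈ b, f {s} := sum_le_sum fun b _ => hf b
    _ = ∑ s ∈ X.biUnion id, f {s} := (sum_biUnion hX).symm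
    _ ≤ ∑ s, f {s} := sum_le_univ_sum_of_nonneg hf₀

theorem sum_image_singleton (f : Finset α → ℝ) :
    ∑ b ∈ univ.image (fun s : α => ({s} : Finset α)), f b = ∑ s, f {s} :=
  sum_image fun _ _ _ _ h => singleton_injective h

theorem pairwiseDisjoint_image_singleton :
    ((univ.image fun s : α => ({s} : Finset α)) : Set (Finset α)).PairwiseDisjoint id := by
  rintro _ hb _ hb' hne
  obtain ⟨s, -, rfl⟩ := mem_image.1 hb
  obtain ⟨s', -, rfl⟩ := mem_image.1 hb'
  exact disjoint_singleton.2 fun h => hne (congrArg _ h)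

theorem maxAlloc_eq_sum_singleton {M : ℕ} {Menu : Finset (Bundle M)} {v : Valuation M}
    (hv₀ : ∀ s, 0 ≤ v {s}) (hsub : ∀ b : Bundle M, v b ≤ ∑ s ∈ b, v {s})
    (hMenu : univ.image (fun s : Fin M => ({s} : Bundle M)) ⊆ Menu) :
    maxAlloc M Menu v = ∑ s, v {s} := by
  refine IsGreatest.csSup_eq ⟨⟨_, ⟨hMenu, pairwiseDisjoint_image_singleton⟩,
    (sum_image_singleton v).symm⟩, ?_⟩
  rintro y ⟨X, ⟨-, hX⟩, rfl⟩
  exact sum_le_sum_singleton_of_pairwiseDisjoint hv₀ hsub hX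

theorem image_singleton_subset_completeMenu (M : ℕ) :
    univ.image (fun s : Fin M => ({s} : Bundle M)) ⊆ completeMenu M :=
  image_subset_iff.2 fun s _ => mem_erase.2 ⟨singleton_ne_empty s, mem_univ _⟩

end SingletonAllocation

theorem itemized_menu_sufficient_of_weak_substitutability_general
    (M : ℕ) (vbar : ℝ)
    (v : Valuation M) (hv : IsValuation M vbar v)
    (hsub : ∀ b : Bundle M, v b ≤ ∑ s ∈ b, v {s}) :
    maxAlloc M (completeMenu M) v = ∑ s : Fin M, v {s} ∧
    maxAlloc M (completeMenu M) v =
      maxAlloc M (Finset.univ.image fun s : Fin M => ({s} : Bundle M)) v := by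
  have hv₀ : ∀ s : Fin M, 0 ≤ v {s} := fun s => (hv.2 {s}).1
  have hcomplete : maxAlloc M (completeMenu M) v = ∑ s, v {s} :=
    maxAlloc_eq_sum_singleton hv₀ hsub (image_singleton_subset_completeMenu M)
  exact ⟨hcomplete, hcomplete.trans (maxAlloc_eq_sum_singleton hv₀ hsub subset_rfl).symm⟩

/-- sufficiency of the itemized menu under weak substitutability: if
`∑_{s∈b} v({s}) ≥ v(b)` for every bundle `b`, then
`max_{X ∈ 𝓑(2^S)} ∑_{b∈X} v(b) = ∑_{s∈S} v({s})`; in particular, the maximum over all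
feasible allocations equals the maximum over feasible allocations of singleton bundles. -/
theorem itemized_menu_sufficient_of_weak_substitutability
    (M : ℕ) (hM : 1 ≤ M) (vbar : ℝ) (hvbar : 0 ≤ vbar)
    (v : Valuation M) (hv : IsValuation M vbar v)
    (hsub : ∀ b : Bundle M, v b ≤ ∑ s ∈ b, v {s}) :
    maxAlloc M (completeMenu M) v = ∑ s : Fin M, v {s} ∧
    maxAlloc M (completeMenu M) v =
      maxAlloc M (Finset.univ.image fun s : Fin M => ({s} : Bundle M)) v :=
  itemized_menu_sufficient_of_weak_substitutability_general M vbar v hv hsub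

end RankGuaranteedAuctions
end

section
/- (Proposition 5, sufficiency of the partitional menu.) Let 𝒦 be a partition of S into nonempty blocks, and let v be a valuation exhibiting 𝒦-partitioned complementarity: (i) for every block b ∈ 𝒦 and every partition κ of b into nonempty subsets, Σ_{b'∈κ} v(b') ≤ v(b); and (ii) for every bundle b' ⊆ S, Σ_{b∈𝒦} v(b ∩ b') ≥ v(b'). Then max_{X ∈ 𝓑(2^S)} Σ_{b∈X} v(b) = Σ_{b∈𝒦} v(b) = max_{X ∈ 𝓑(𝒦)} Σ_{b∈X} v(b). -/
open MeasureTheory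
open scoped ENNReal BigOperators

namespace RankGuaranteedAuctions

/-!
For a feasible allocation `X`, partitioned complementarity across blocks gives
`∑_{b' ∈ X} v(b') ≤ ∑_{b ∈ 𝒦} ∑_{b' ∈ X} v(b ∩ b')`. For a fixed block `b`, the nonempty
traces `b ∩ b'` are pairwise disjoint subsets of `b`; together with the leftover part of `b`
they partition `b`, so within-block complementarity and `v ≥ 0` bound their total value by
`v(b)`. Hence no allocation beats `𝒦` itself, which is feasible in both menus.
-/

theorem maxAlloc_eq_of_feasible_of_forall_le {M : ℕ} {Menu X₀ : Finset (Bundle M)}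
    {f : Bundle M → ℝ} (hX₀ : Feasible M Menu X₀)
    (hle : ∀ X, Feasible M Menu X → ∑ b ∈ X, f b ≤ ∑ b ∈ X₀, f b) :
    maxAlloc M Menu f = ∑ b ∈ X₀, f b :=
  IsGreatest.csSup_eq ⟨⟨X₀, hX₀, rfl⟩, by rintro _ ⟨X, hX, rfl⟩; exact hle X hX⟩

section Superadditive

variable {M : ℕ} {v : Valuation M} {b : Bundle M}

theorem sum_le_of_pairwiseDisjoint_subset (hnonneg : ∀ c, 0 ≤ v c)
    (hb : ∀ κ, IsPartitionOf M κ b → ∑ c ∈ κ, v c ≤ v b) {κ : Finset (Bundle M)}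
    (hne : ∀ c ∈ κ, c ≠ ∅) (hdisj : ∀ c ∈ κ, ∀ c' ∈ κ, c ≠ c' → Disjoint c c')
    (hsub : ∀ c ∈ κ, c ⊆ b) :
    ∑ c ∈ κ, v c ≤ v b := by
  have hsup : κ.sup id ⊆ b := Finset.sup_le hsub
  set r := b \ κ.sup id
  by_cases hr : r = ∅
  · refine hb κ ⟨hne, hdisj, le_antisymm hsup ?_⟩
    rwa [Finset.sdiff_eq_empty_iff_subset] at hr
  have hr_disj : ∀ c ∈ κ, Disjoint r c := fun c hc =>
    Finset.sdiff_disjoint.mono_right (Finset.le_sup (f := id) hc)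
  have hrκ : r ∉ κ := fun hrκ => hr (Finset.disjoint_self_iff_empty r |>.mp (hr_disj r hrκ))
  have hpart : IsPartitionOf M (insert r κ) b := by
    refine ⟨?_, ?_, ?_⟩
    · simpa only [Finset.mem_insert, forall_eq_or_imp] using ⟨hr, hne⟩
    · intro c hc c' hc' hcc'
      rcases Finset.mem_insert.mp hc with rfl | hc <;>
        rcases Finset.mem_insert.mp hc' with rfl | hc'
      exacts [absurd rfl hcc', hr_disj c' hc', (hr_disj c hc).symm, hdisj c hc c' hc' hcc']
    · rw [Finset.sup_insert, id, Finset.sup_eq_union, Finset.sdiff_union_of_subset hsup]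
  have := hb _ hpart
  rw [Finset.sum_insert hrκ] at this
  linarith [hnonneg r]

theorem sum_inter_le (hempty : v ∅ = 0) (hnonneg : ∀ c, 0 ≤ v c)
    (hb : ∀ κ, IsPartitionOf M κ b → ∑ c ∈ κ, v c ≤ v b) {X : Finset (Bundle M)}
    (hX : ∀ c ∈ X, ∀ c' ∈ X, c ≠ c' → Disjoint c c') :
    ∑ b' ∈ X, v (b ∩ b') ≤ v b := by
  classical
  have htraces : (X : Set (Bundle M)).PairwiseDisjoint (b ∩ ·) := fun c hc c' hc' hcc' =>
    (hX c hc c' hc' hcc').mono Finset.inter_subset_right Finset.inter_subset_right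
  rw [← Finset.sum_image_of_disjoint hempty htraces,
    ← Finset.sum_filter_of_ne (p := (· ≠ ∅)) fun c _ hc h => hc (h ▸ hempty)]
  refine sum_le_of_pairwiseDisjoint_subset hnonneg hb (fun c hc => (Finset.mem_filter.mp hc).2)
    ?_ ?_
  · simp only [Finset.mem_filter, Finset.mem_image]
    rintro _ ⟨⟨d, hd, rfl⟩, -⟩ _ ⟨⟨d', hd', rfl⟩, -⟩ hne
    exact htraces hd hd' fun h => hne (h ▸ rfl)
  · simp only [Finset.mem_filter, Finset.mem_image]
    rintro _ ⟨⟨d, -, rfl⟩, -⟩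
    exact Finset.inter_subset_left

end Superadditive

theorem sum_le_sum_blocks {M : ℕ} {v : Valuation M} (hempty : v ∅ = 0)
    (hnonneg : ∀ c, 0 ≤ v c) {K : Finset (Bundle M)}
    (hwithin : ∀ b ∈ K, ∀ κ, IsPartitionOf M κ b → ∑ c ∈ κ, v c ≤ v b)
    (hacross : ∀ b' : Bundle M, v b' ≤ ∑ b ∈ K, v (b ∩ b')) {X : Finset (Bundle M)}
    (hX : ∀ c ∈ X, ∀ c' ∈ X, c ≠ c' → Disjoint c c') :
    ∑ b' ∈ X, v b' ≤ ∑ b ∈ K, v b :=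
  calc ∑ b' ∈ X, v b' ≤ ∑ b' ∈ X, ∑ b ∈ K, v (b ∩ b') := Finset.sum_le_sum fun b' _ => hacross b'
    _ = ∑ b ∈ K, ∑ b' ∈ X, v (b ∩ b') := Finset.sum_comm
    _ ≤ ∑ b ∈ K, v b :=
      Finset.sum_le_sum fun b hb => sum_inter_le hempty hnonneg (hwithin b hb) hX

theorem partitional_menu_sufficient_of_partitioned_complementarity_general
    (M : ℕ) (vbar : ℝ)
    (v : Valuation M) (hv : IsValuation M vbar v)
    (K : Finset (Bundle M)) (hK : IsPartitionOf M K Finset.univ)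
    (hwithin : ∀ b ∈ K, ∀ κ : Finset (Bundle M), IsPartitionOf M κ b →
      ∑ c ∈ κ, v c ≤ v b)
    (hacross : ∀ b' : Bundle M, v b' ≤ ∑ b ∈ K, v (b ∩ b')) :
    maxAlloc M (completeMenu M) v = ∑ b ∈ K, v b ∧
    (∑ b ∈ K, v b) = maxAlloc M K v := by
  obtain ⟨hKne, hKdisj, -⟩ := hK
  have hle : ∀ Menu X, Feasible M Menu X → ∑ b ∈ X, v b ≤ ∑ b ∈ K, v b := fun _ _ hX =>
    sum_le_sum_blocks hv.1 (fun c => (hv.2 c).1) hwithin hacross hX.2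
  have hK_complete : Feasible M (completeMenu M) K :=
    ⟨fun b hb => Finset.mem_erase.mpr ⟨hKne b hb, Finset.mem_univ b⟩, hKdisj⟩
  exact ⟨maxAlloc_eq_of_feasible_of_forall_le hK_complete (hle _),
    (maxAlloc_eq_of_feasible_of_forall_le ⟨subset_rfl, hKdisj⟩ (hle K)).symm⟩

/-- Proposition 5, sufficiency of the partitional menu: if `𝒦` is a
partition of `S` into nonempty blocks and `v` exhibits `𝒦`-partitioned complementarity,
then `max_{X ∈ 𝓑(2^S)} ∑_{b∈X} v(b) = ∑_{b∈𝒦} v(b) = max_{X ∈ 𝓑(𝒦)} ∑_{b∈X} v(b)`. -/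
theorem partitional_menu_sufficient_of_partitioned_complementarity
    (M : ℕ) (hM : 1 ≤ M) (vbar : ℝ) (hvbar : 0 ≤ vbar)
    (v : Valuation M) (hv : IsValuation M vbar v)
    (K : Finset (Bundle M)) (hK : IsPartitionOf M K Finset.univ)
    (hwithin : ∀ b ∈ K, ∀ κ : Finset (Bundle M), IsPartitionOf M κ b →
      ∑ c ∈ κ, v c ≤ v b)
    (hacross : ∀ b' : Bundle M, v b' ≤ ∑ b ∈ K, v (b ∩ b')) :
    maxAlloc M (completeMenu M) v = ∑ b ∈ K, v b ∧
    (∑ b ∈ K, v b) = maxAlloc M K v :=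
  partitional_menu_sufficient_of_partitioned_complementarity_general M vbar v hv K hK hwithin
    hacross

end RankGuaranteedAuctions
end

section
/- (Sufficiency of the quantity menu for homogeneous goods.) Suppose goods are homogeneous: there is u : {0,1,…,M} → ℝ with u(0) = 0 and u(l) ∈ [0, v̄] such that v(b) = u(|b|) for every bundle b. For homogeneous goods a feasible allocation from a menu 𝓜 is a subset X ⊆ 𝓜 with Σ_{b∈X} |b| ≤ M, and 𝓑'(𝓜) denotes the set of such allocations. Let 𝓜₀ be any menu that contains, for each l ∈ {1,…,M}, exactly ⌊M/l⌋ pairwise distinct bundles of size l. Then max_{X ∈ 𝓑'(𝓜₀)} Σ_{b∈X} v(b) = max_{X ∈ 𝓑'(2^S)} Σ_{b∈X} v(b). -/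
open MeasureTheory
open scoped ENNReal BigOperators

/-!
For homogeneous goods an allocation matters only through its size profile, the number of its
bundles of each size `l`. A feasible allocation has at most `⌊M/l⌋` bundles of size `l`, since
together they hold at most `M` items; so `𝓜₀` has enough bundles of every size to realise the
same profile, which has the same total size and the same value.
-/

namespace Finset

variable {α β : Type*} [DecidableEq β] {s t : Finset α} {g : α → β}

theorem sum_comp_eq_of_card_fiber_eq {M : Type*} [AddCommMonoid M]
    (h : ∀ b, #{a ∈ s | g a = b} = #{a ∈ t | g a = b}) (f : β → M) :
    ∑ a ∈ s, f (g a) = ∑ a ∈ t, f (g a) := by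
  have himage : s.image g = t.image g := by
    ext b
    rw [← fiber_card_ne_zero_iff_mem_image, ← fiber_card_ne_zero_iff_mem_image, h]
  rw [sum_comp, sum_comp, himage]
  exact sum_congr rfl fun b _ => by rw [h b]

theorem exists_subset_card_fiber_eq [DecidableEq α]
    (h : ∀ b, #{a ∈ s | g a = b} ≤ #{a ∈ t | g a = b}) :
    ∃ u ⊆ t, ∀ b, #{a ∈ u | g a = b} = #{a ∈ s | g a = b} := by
  choose T hTt hTcard using fun b => exists_subset_card_eq (h b)
  have hT : ∀ {a b}, a ∈ T b → g a = b := fun ha => (mem_filter.1 (hTt _ ha)).2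
  refine ⟨(s.image g).biUnion T, biUnion_subset.2 fun b _ => (hTt b).trans (filter_subset _ _),
    fun b => ?_⟩
  suffices {a ∈ (s.image g).biUnion T | g a = b} = T b by rw [this, hTcard]
  ext a
  simp only [mem_filter, mem_biUnion]
  constructor
  · rintro ⟨⟨b', -, ha⟩, rfl⟩
    rwa [hT ha]
  · intro ha
    have hb : b ∈ s.image g := by
      rw [← fiber_card_ne_zero_iff_mem_image, ← hTcard, ← pos_iff_ne_zero, card_pos]
      exact ⟨a, ha⟩
    exact ⟨⟨b, hb, ha⟩, hT ha⟩

theorem card_fiber_card_le_sum_card_div {ι : Type*} (X : Finset (Finset ι)) {l : ℕ}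
    (hl : 0 < l) : #{b ∈ X | #b = l} ≤ (∑ b ∈ X, #b) / l := by
  rw [Nat.le_div_iff_mul_le hl]
  calc #{b ∈ X | #b = l} * l ≤ ∑ b ∈ X with #b = l, #b :=
        card_nsmul_le_sum _ _ _ fun b hb => (mem_filter.1 hb).2.ge
    _ ≤ ∑ b ∈ X, #b := sum_le_sum_of_subset (filter_subset _ _)

end Finset

namespace RankGuaranteedAuctions

open Finset

section

variable {M : ℕ} {Menu₀ X : Finset (Bundle M)}

theorem card_fiber_card_le_of_feasibleQ
    (hcount : ∀ l ∈ Icc 1 M, #{b ∈ Menu₀ | #b = l} = M / l)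
    (hX : FeasibleQ M (completeMenu M) X) (l : ℕ) :
    #{b ∈ X | #b = l} ≤ #{b ∈ Menu₀ | #b = l} := by
  by_cases hl : l ∈ X.image card
  · obtain ⟨b, hbX, rfl⟩ := mem_image.1 hl
    have hb : b.Nonempty := nonempty_iff_ne_empty.2 (mem_erase.1 (hX.1 hbX)).1
    have hbM : #b ≤ M := by simpa using card_le_univ b
    calc #{a ∈ X | #a = #b} ≤ (∑ a ∈ X, #a) / #b :=
          card_fiber_card_le_sum_card_div X hb.card_pos
      _ ≤ M / #b := Nat.div_le_div_right hX.2
      _ = #{a ∈ Menu₀ | #a = #b} := (hcount _ (mem_Icc.2 ⟨hb.card_pos, hbM⟩)).symm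
  · rw [← fiber_card_ne_zero_iff_mem_image, not_not] at hl
    rw [hl]
    exact Nat.zero_le _

theorem exists_feasibleQ_card_fiber_eq
    (hcount : ∀ l ∈ Icc 1 M, #{b ∈ Menu₀ | #b = l} = M / l)
    (hX : FeasibleQ M (completeMenu M) X) :
    ∃ Y, FeasibleQ M Menu₀ Y ∧ ∀ l, #{b ∈ Y | #b = l} = #{b ∈ X | #b = l} := by
  obtain ⟨Y, hY, hfiber⟩ :=
    exists_subset_card_fiber_eq (g := card) (card_fiber_card_le_of_feasibleQ hcount hX)
  exact ⟨Y, ⟨hY, (sum_comp_eq_of_card_fiber_eq hfiber id).trans_le hX.2⟩, hfiber⟩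

end

theorem quantity_menu_sufficient_of_homogeneous_goods_general
    (M : ℕ) (u : ℕ → ℝ)
    (v : Valuation M) (hhom : ∀ b : Bundle M, v b = u b.card)
    (Menu₀ : Finset (Bundle M)) (hMenu₀ : IsMenu M Menu₀)
    (hcount : ∀ l ∈ Finset.Icc 1 M,
      (Menu₀.filter fun b : Bundle M => b.card = l).card = M / l) :
    maxAllocQ M Menu₀ v = maxAllocQ M (completeMenu M) v := by
  have hsub : Menu₀ ⊆ completeMenu M := fun b hb =>
    mem_erase.2 ⟨ne_of_mem_of_not_mem hb hMenu₀.2, mem_univ b⟩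
  unfold maxAllocQ
  congr 1
  ext y
  constructor
  · rintro ⟨X, hX, rfl⟩
    exact ⟨X, ⟨hX.1.trans hsub, hX.2⟩, rfl⟩
  · rintro ⟨X, hX, rfl⟩
    obtain ⟨Y, hY, hfiber⟩ := exists_feasibleQ_card_fiber_eq hcount hX
    refine ⟨Y, hY, ?_⟩
    simp only [hhom]
    exact (sum_comp_eq_of_card_fiber_eq hfiber u).symm

/-- sufficiency of the quantity menu for homogeneous goods: if `v(b) = u(|b|)`
and the menu `𝓜₀` contains, for each `l ∈ {1,…,M}`, exactly `⌊M/l⌋` distinct bundles of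
size `l`, then the maximum over homogeneous-goods-feasible allocations from `𝓜₀` equals
the maximum over homogeneous-goods-feasible allocations from the complete menu. -/
theorem quantity_menu_sufficient_of_homogeneous_goods
    (M : ℕ) (hM : 1 ≤ M) (vbar : ℝ) (hvbar : 0 ≤ vbar)
    (u : ℕ → ℝ) (hu0 : u 0 = 0) (hu : ∀ l ≤ M, 0 ≤ u l ∧ u l ≤ vbar)
    (v : Valuation M) (hhom : ∀ b : Bundle M, v b = u b.card)
    (Menu₀ : Finset (Bundle M)) (hMenu₀ : IsMenu M Menu₀)
    (hcount : ∀ l ∈ Finset.Icc 1 M,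
      (Menu₀.filter fun b : Bundle M => b.card = l).card = M / l) :
    maxAllocQ M Menu₀ v = maxAllocQ M (completeMenu M) v :=
  quantity_menu_sufficient_of_homogeneous_goods_general M u v hhom Menu₀ hMenu₀ hcount

end RankGuaranteedAuctions
end
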